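/- arXiv:1402.5942 — 4 statements merged into one kernel-verified Lean document; each statement's English description precedes it below -/
import Mathlib

section
/- The map φ: ℝ⁴ → ℝ³, φ(q₁,q₂,p₁,p₂) = (q₁, p₁, p₂ − (1/2)q₁²), is a surjective submersion mapping solutions of the Hamiltonian system q̇₁ = p₁, q̇₂ = kp₂ − (k/2)q₁², ṗ₁ = kp₂q₁ − (k/2)q₁³, ṗ₂ = 0 onto solutions of ẋ = y, ẏ = kxz, ż = −xy; that is, the differential of φ maps the ℝ⁴ vector field to the ℝ³ vector field at every point. -/
/-!
`φ` is the projection forgetting `q₂` followed by the shear `(x, y, z) ↦ (x, y, z - x² / 2)`,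
a diffeomorphism of `ℝ³`; hence it is a surjective submersion, with
`Dφ(u) v = (v₁, v₃, v₄ - q₁ v₁)`. Evaluating this differential on `X₄` gives `X₃ ∘ φ` after
the `k`-terms cancel.
-/

noncomputable section

namespace SymplecticRealization

def phi (u : ℝ × ℝ × ℝ × ℝ) : ℝ × ℝ × ℝ :=
  (u.1, u.2.2.1, u.2.2.2 - (1/2) * u.1 ^ 2)

def hamiltonianField (k : ℝ) (u : ℝ × ℝ × ℝ × ℝ) : ℝ × ℝ × ℝ × ℝ :=
  (u.2.2.1, k * u.2.2.2 - (k/2) * u.1 ^ 2, k * u.2.2.2 * u.1 - (k/2) * u.1 ^ 3, 0)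

def reducedField (k : ℝ) (p : ℝ × ℝ × ℝ) : ℝ × ℝ × ℝ :=
  (p.2.1, k * p.1 * p.2.2, -(p.1 * p.2.1))

theorem phi_surjective : Function.Surjective phi := by
  rintro ⟨x, y, z⟩
  exact ⟨(x, 0, y, z + (1/2) * x ^ 2), by simp [phi]⟩

theorem fderiv_phi_apply (u v : ℝ × ℝ × ℝ × ℝ) :
    fderiv ℝ phi u v = (v.1, v.2.2.1, v.2.2.2 - u.1 * v.1) := by
  have hq := hasFDerivAt_fst (𝕜 := ℝ) (p := u)
  have hp := hasFDerivAt_snd.comp u (hasFDerivAt_snd (𝕜 := ℝ) (p := u))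
  rw [HasFDerivAt.fderiv (f := phi) (hq.prodMk ((hasFDerivAt_fst.comp u hp).prodMk
    ((hasFDerivAt_snd.comp u hp).sub ((hq.pow 2).const_mul (1/2)))))]
  simp
  ring

theorem fderiv_phi_surjective (u : ℝ × ℝ × ℝ × ℝ) : Function.Surjective (fderiv ℝ phi u) := by
  rintro ⟨a, b, c⟩
  exact ⟨(a, 0, b, c + u.1 * a), by simp [fderiv_phi_apply]⟩

theorem fderiv_phi_hamiltonianField (k : ℝ) (u : ℝ × ℝ × ℝ × ℝ) :
    fderiv ℝ phi u (hamiltonianField k u) = reducedField k (phi u) := by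
  simp only [fderiv_phi_apply, hamiltonianField, reducedField, phi, Prod.mk.injEq]
  refine ⟨trivial, ?_, ?_⟩ <;> ring

end SymplecticRealization

end

/-- φ(q₁,q₂,p₁,p₂) = (q₁, p₁, p₂ − (1/2)q₁²) is a surjective submersion
intertwining X₄(q₁,q₂,p₁,p₂) = (p₁, kp₂ − (k/2)q₁², kp₂q₁ − (k/2)q₁³, 0)
with X₃(x,y,z) = (y, kxz, −xy). -/
theorem phi_symplectic_realization (k : ℝ) :
    let φ : ℝ × ℝ × ℝ × ℝ → ℝ × ℝ × ℝ :=
      fun u => (u.1, u.2.2.1, u.2.2.2 - (1/2) * u.1 ^ 2)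
    let X4 : ℝ × ℝ × ℝ × ℝ → ℝ × ℝ × ℝ × ℝ :=
      fun u => (u.2.2.1, k * u.2.2.2 - (k/2) * u.1 ^ 2,
        k * u.2.2.2 * u.1 - (k/2) * u.1 ^ 3, 0)
    let X3 : ℝ × ℝ × ℝ → ℝ × ℝ × ℝ :=
      fun p => (p.2.1, k * p.1 * p.2.2, -(p.1 * p.2.1))
    Function.Surjective φ ∧
    (∀ u : ℝ × ℝ × ℝ × ℝ, Function.Surjective (fderiv ℝ φ u)) ∧
    (∀ u : ℝ × ℝ × ℝ × ℝ, fderiv ℝ φ u (X4 u) = X3 (φ u)) :=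
  ⟨SymplecticRealization.phi_surjective, SymplecticRealization.fderiv_phi_surjective,
    SymplecticRealization.fderiv_phi_hamiltonianField k⟩
end

section
/- Let k < 0 and M > 0. The curve t ↦ (x(t), y(t), z(t)) with x(t) = 2√M sec(√(−kM) t), y(t) = 2M√(−k) sec(√(−kM) t) tan(√(−kM) t), z(t) = −M(1 + 2 tan²(√(−kM) t)), defined for t ∈ (−π/(2√(−kM)), π/(2√(−kM))), is a solution of the system ẋ = y, ẏ = kxz, ż = −xy. -/
open Real

/-! Write `a = √M`, `b = √(-k)`, so that the frequency is `s = ab`. Since `(sec (st))' = s sec tan`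
and `(tan (st))' = s sec²`, the three equations become polynomial identities in `sec` and `tan`
(using `sec² = 1 + tan²` for `ẏ`) once `a² = M` and `b² = -k`. -/

namespace Real

theorem sec_sq_eq_one_add_tan_sq {θ : ℝ} (h : cos θ ≠ 0) : (1 / cos θ) ^ 2 = 1 + tan θ ^ 2 := by
  rw [tan_eq_sin_div_cos]
  field_simp
  linarith [sin_sq_add_cos_sq θ]

theorem hasDerivAt_sec_mul {s t : ℝ} (h : cos (s * t) ≠ 0) :
    HasDerivAt (fun u => 1 / cos (s * u)) (s * (1 / cos (s * t)) * tan (s * t)) t := by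
  have hcos := ((hasDerivAt_id t).const_mul s).cos
  simp only [id, mul_one] at hcos
  refine ((hasDerivAt_const t (1 : ℝ)).div hcos h).congr_deriv ?_
  rw [tan_eq_sin_div_cos]
  field_simp
  ring

theorem hasDerivAt_tan_mul {s t : ℝ} (h : cos (s * t) ≠ 0) :
    HasDerivAt (fun u => tan (s * u)) (s * (1 / cos (s * t)) ^ 2) t := by
  have hlin := (hasDerivAt_id t).const_mul s
  simp only [id, mul_one] at hlin
  refine ((hasDerivAt_tan h).comp t hlin).congr_deriv ?_
  ring

theorem cos_mul_pos_of_mem_Ioo {s t : ℝ} (hs : 0 < s)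
    (ht : t ∈ Set.Ioo (-(π / (2 * s))) (π / (2 * s))) : 0 < cos (s * t) := by
  have hbound : π / (2 * s) * s = π / 2 := by field_simp
  apply cos_pos_of_mem_Ioo
  constructor <;> nlinarith [ht.1, ht.2]

end Real

theorem hasDerivAt_sec_tan_curve {a b k M s t : ℝ} (ha : a ^ 2 = M) (hb : b ^ 2 = -k)
    (hs : a * b = s) (hc : cos (s * t) ≠ 0) :
    let x : ℝ → ℝ := fun t => 2 * a * (1 / cos (s * t))
    let y : ℝ → ℝ := fun t => 2 * M * b * (1 / cos (s * t)) * tan (s * t)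
    let z : ℝ → ℝ := fun t => -M * (1 + 2 * tan (s * t) ^ 2)
    HasDerivAt x (y t) t ∧ HasDerivAt y (k * x t * z t) t ∧ HasDerivAt z (-(x t * y t)) t := by
  intro x y z
  have hsec := hasDerivAt_sec_mul hc
  have htan := hasDerivAt_tan_mul hc
  obtain rfl : k = -b ^ 2 := by linarith
  subst ha hs
  refine ⟨?_, ?_, ?_⟩
  · refine (hsec.const_mul (2 * a)).congr_deriv ?_
    ring
  · refine ((hsec.const_mul (2 * a ^ 2 * b)).mul htan).congr_deriv ?_
    simp only [x, z]
    rw [sec_sq_eq_one_add_tan_sq hc]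
    ring
  · refine ((((htan.pow 2).const_mul 2).const_add 1).const_mul (-a ^ 2)).congr_deriv ?_
    simp only [x, y]
    ring

/-- For k < 0, M > 0, the curve
x(t) = 2√M sec(√(−kM)t), y(t) = 2M√(−k) sec(√(−kM)t)tan(√(−kM)t),
z(t) = −M(1 + 2tan²(√(−kM)t)) solves ẋ = y, ẏ = kxz, ż = −xy on
(−π/(2√(−kM)), π/(2√(−kM))). -/
theorem sec_tan_solution (k M : ℝ) (hk : k < 0) (hM : 0 < M) :
    let s := Real.sqrt (-(k * M))
    let x : ℝ → ℝ := fun t => 2 * Real.sqrt M * (1 / Real.cos (s * t))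
    let y : ℝ → ℝ := fun t =>
      2 * M * Real.sqrt (-k) * (1 / Real.cos (s * t)) * Real.tan (s * t)
    let z : ℝ → ℝ := fun t => -M * (1 + 2 * Real.tan (s * t) ^ 2)
    ∀ t ∈ Set.Ioo (-(π / (2 * s))) (π / (2 * s)),
      HasDerivAt x (y t) t ∧
      HasDerivAt y (k * x t * z t) t ∧
      HasDerivAt z (-(x t * y t)) t := by
  intro s x y z t ht
  have hs : √M * √(-k) = s := by
    rw [← sqrt_mul hM.le, mul_neg, mul_comm]
  have hs_pos : 0 < s := sqrt_pos.2 (by nlinarith)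
  exact hasDerivAt_sec_tan_curve (sq_sqrt hM.le) (sq_sqrt (neg_nonneg.2 hk.le)) hs
    (cos_mul_pos_of_mem_Ioo hs_pos ht).ne'
end

section
/- Let k < 0 and M > 0, and let p(t) = e^{M√(−k)(t+α)} for fixed α ∈ ℝ. Then the curve x(t) = M(p(t)−1)/(p(t)+1), y(t) = 2M²√(−k) p(t)/(p(t)+1)², z(t) = 2M² p(t)/(p(t)+1)² is a solution of ẋ = y, ẏ = kxz, ż = −xy, and it satisfies (x(t),y(t),z(t)) → (−M,0,0) as t → −∞ and (x(t),y(t),z(t)) → (M,0,0) as t → +∞. -/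
/-- For k < 0, M > 0, α ∈ ℝ, p(t) = e^{M√(−k)(t+α)}, the curve
x = M(p−1)/(p+1), y = 2M²√(−k)p/(p+1)², z = 2M²p/(p+1)² solves
ẋ = y, ẏ = kxz, ż = −xy and is heteroclinic from (−M,0,0) to (M,0,0). -/
theorem heteroclinic_solution (k M α : ℝ) (hk : k < 0) (hM : 0 < M) :
    let p : ℝ → ℝ := fun t => Real.exp (M * Real.sqrt (-k) * (t + α))
    let x : ℝ → ℝ := fun t => M * (p t - 1) / (p t + 1)
    let y : ℝ → ℝ := fun t => 2 * M ^ 2 * Real.sqrt (-k) * p t / (p t + 1) ^ 2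
    let z : ℝ → ℝ := fun t => 2 * M ^ 2 * p t / (p t + 1) ^ 2
    (∀ t : ℝ,
      HasDerivAt x (y t) t ∧
      HasDerivAt y (k * x t * z t) t ∧
      HasDerivAt z (-(x t * y t)) t) ∧
    Filter.Tendsto (fun t => (x t, y t, z t)) Filter.atBot (nhds (-M, 0, 0)) ∧
    Filter.Tendsto (fun t => (x t, y t, z t)) Filter.atTop (nhds (M, 0, 0)) := by
  intro p x y z
  set s : ℝ := Real.sqrt (-k) with hs_def
  have hs : 0 < s := Real.sqrt_pos.mpr (by linarith)
  have hss : s ^ 2 = -k := Real.sq_sqrt (by linarith)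
  have hk' : k = -s ^ 2 := by linarith
  have hp : ∀ t, 0 < p t := fun t => Real.exp_pos _
  have hp1 : ∀ t, p t + 1 ≠ 0 := fun t => by have := hp t; positivity
  have hdp : ∀ t, HasDerivAt p (M * s * p t) t := by
    intro t
    have h1 : HasDerivAt (fun t : ℝ => M * s * (t + α)) (M * s) t := by
      simpa using ((hasDerivAt_id t).add_const α).const_mul (M * s)
    have := h1.exp
    simpa [p, mul_comm] using this
  refine ⟨fun t => ?_, ?_, ?_⟩
  · have hdx : HasDerivAt x (y t) t := by
      have hnum : HasDerivAt (fun t => M * (p t - 1)) (M * (M * s * p t)) t :=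
        ((hdp t).sub_const 1).const_mul M
      have hden : HasDerivAt (fun t => p t + 1) (M * s * p t) t := (hdp t).add_const 1
      have := hnum.div hden (hp1 t)
      refine this.congr_deriv ?_
      have := hp1 t
      simp only [y]
      field_simp
      ring
    have hdy : HasDerivAt y (k * x t * z t) t := by
      have hnum : HasDerivAt (fun t => 2 * M ^ 2 * s * p t) (2 * M ^ 2 * s * (M * s * p t)) t :=
        (hdp t).const_mul _
      have hden : HasDerivAt (fun t => (p t + 1) ^ 2)
          (2 * (p t + 1) ^ 1 * (M * s * p t)) t := ((hdp t).add_const 1).pow 2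
      have hden2 : (p t + 1) ^ 2 ≠ 0 := pow_ne_zero _ (hp1 t)
      have := hnum.div hden hden2
      refine this.congr_deriv ?_
      have := hp1 t
      rw [hk']
      simp only [x, z]
      field_simp
      ring
    have hdz : HasDerivAt z (-(x t * y t)) t := by
      have hnum : HasDerivAt (fun t => 2 * M ^ 2 * p t) (2 * M ^ 2 * (M * s * p t)) t :=
        (hdp t).const_mul _
      have hden : HasDerivAt (fun t => (p t + 1) ^ 2)
          (2 * (p t + 1) ^ 1 * (M * s * p t)) t := ((hdp t).add_const 1).pow 2
      have hden2 : (p t + 1) ^ 2 ≠ 0 := pow_ne_zero _ (hp1 t)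
      have := hnum.div hden hden2
      refine this.congr_deriv ?_
      have := hp1 t
      simp only [x, y]
      field_simp
      ring
    exact ⟨hdx, hdy, hdz⟩
  · -- atBot
    have hg : Filter.Tendsto (fun t : ℝ => M * s * (t + α)) Filter.atBot Filter.atBot := by
      apply Filter.Tendsto.const_mul_atBot (by positivity : (0:ℝ) < M * s)
      exact Filter.tendsto_atBot_add_const_right _ α Filter.tendsto_id
    have hp0 : Filter.Tendsto p Filter.atBot (nhds 0) :=
      Real.tendsto_exp_atBot.comp hg
    have hx : Filter.Tendsto x Filter.atBot (nhds (-M)) := by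
      have hf : ContinuousAt (fun u : ℝ => M * (u - 1) / (u + 1)) 0 := by
        apply ContinuousAt.div (by fun_prop) (by fun_prop)
        norm_num
      have := hf.tendsto.comp hp0
      simp only [Function.comp_def] at this
      convert this using 2
      norm_num
    have hy : Filter.Tendsto y Filter.atBot (nhds 0) := by
      have hf : ContinuousAt (fun u : ℝ => 2 * M ^ 2 * s * u / (u + 1) ^ 2) 0 := by
        apply ContinuousAt.div (by fun_prop) (by fun_prop)
        norm_num
      have := hf.tendsto.comp hp0
      simp only [Function.comp_def] at this
      convert this using 2
      norm_num
    have hz : Filter.Tendsto z Filter.atBot (nhds 0) := by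
      have hf : ContinuousAt (fun u : ℝ => 2 * M ^ 2 * u / (u + 1) ^ 2) 0 := by
        apply ContinuousAt.div (by fun_prop) (by fun_prop)
        norm_num
      have := hf.tendsto.comp hp0
      simp only [Function.comp_def] at this
      convert this using 2
      norm_num
    exact hx.prodMk_nhds (hy.prodMk_nhds hz)
  · -- atTop
    have hg : Filter.Tendsto (fun t : ℝ => M * s * (t + α)) Filter.atTop Filter.atTop := by
      apply Filter.Tendsto.const_mul_atTop (by positivity : (0:ℝ) < M * s)
      exact Filter.tendsto_atTop_add_const_right _ α Filter.tendsto_id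
    have hpT : Filter.Tendsto p Filter.atTop Filter.atTop :=
      Real.tendsto_exp_atTop.comp hg
    have hinv : Filter.Tendsto (fun t => 1 / (p t + 1)) Filter.atTop (nhds 0) := by
      simp only [one_div]
      exact (hpT.atTop_add tendsto_const_nhds).inv_tendsto_atTop
    have hratio : Filter.Tendsto (fun t => p t / (p t + 1)) Filter.atTop (nhds 1) := by
      have : ∀ t, p t / (p t + 1) = 1 - 1 / (p t + 1) := by
        intro t
        field_simp [hp1 t]
        ring
      simp only [this]
      have h1 : Filter.Tendsto (fun _ : ℝ => (1:ℝ)) Filter.atTop (nhds 1) := tendsto_const_nhds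
      simpa using h1.sub hinv
    have hx : Filter.Tendsto x Filter.atTop (nhds M) := by
      have hrw : ∀ t, x t = M - 2 * M * (1 / (p t + 1)) := by
        intro t
        have := hp1 t
        simp only [x]
        field_simp
        ring
      have h1 : Filter.Tendsto (fun _ : ℝ => M) Filter.atTop (nhds M) := tendsto_const_nhds
      have h2 := h1.sub (hinv.const_mul (2 * M))
      have h3 : M - 2 * M * 0 = M := by ring
      rw [h3] at h2
      exact h2.congr (fun t => (hrw t).symm)
    have hz : Filter.Tendsto z Filter.atTop (nhds 0) := by
      have hrw : ∀ t, z t = 2 * M ^ 2 * ((p t / (p t + 1)) * (1 / (p t + 1))) := by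
        intro t
        have := hp1 t
        simp only [z]
        field_simp
      have h2 := (hratio.mul hinv).const_mul (2 * M ^ 2)
      rw [mul_zero, mul_zero] at h2
      exact h2.congr (fun t => (hrw t).symm)
    have hy : Filter.Tendsto y Filter.atTop (nhds 0) := by
      have hrw : ∀ t, y t = s * z t := by
        intro t
        simp only [y, z]
        ring
      have h2 := hz.const_mul s
      rw [mul_zero] at h2
      exact h2.congr (fun t => (hrw t).symm)
    exact hx.prodMk_nhds (hy.prodMk_nhds hz)
end

section
/- Let k < 0 and M ≠ 0 with p(t) = e^{M√(−k)(t+α)}. The heteroclinic curve x(t) = M(p(t)−1)/(p(t)+1), y(t) = 2M²√(−k) p(t)/(p(t)+1)², z(t) = 2M² p(t)/(p(t)+1)² satisfies H_k(x(t),y(t),z(t)) = H_k(M,0,0) = 0 and C(x(t),y(t),z(t)) = C(M,0,0) = M²/2 for all t ∈ ℝ. -/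
lemma sq_sqrt_neg_mul_add_mul_sq {k : ℝ} (hk : k ≤ 0) (w : ℝ) :
    (Real.sqrt (-k) * w) ^ 2 + k * w ^ 2 = 0 := by
  have hs : Real.sqrt (-k) ^ 2 = -k := Real.sq_sqrt (neg_nonneg.mpr hk)
  linear_combination w ^ 2 * hs

-- Clearing denominators, this is `(p - 1)² + 4p = (p + 1)²`.
lemma half_sq_mul_div_add_div_sq (M : ℝ) {p : ℝ} (hp : p + 1 ≠ 0) :
    (1 / 2) * (M * (p - 1) / (p + 1)) ^ 2 + 2 * M ^ 2 * p / (p + 1) ^ 2 = M ^ 2 / 2 := by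
  field_simp
  ring

theorem heteroclinic_levels_general (k M α : ℝ) (hk : k < 0) :
    let p : ℝ → ℝ := fun t => Real.exp (M * Real.sqrt (-k) * (t + α))
    let x : ℝ → ℝ := fun t => M * (p t - 1) / (p t + 1)
    let y : ℝ → ℝ := fun t => 2 * M ^ 2 * Real.sqrt (-k) * p t / (p t + 1) ^ 2
    let z : ℝ → ℝ := fun t => 2 * M ^ 2 * p t / (p t + 1) ^ 2
    ∀ t : ℝ,
      (1/2) * (y t ^ 2 + k * z t ^ 2) = 0 ∧
      (1/2) * x t ^ 2 + z t = M ^ 2 / 2 := by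
  intro p x y z t
  have hy : y t = Real.sqrt (-k) * z t := by simp only [y, z]; ring
  have hp : p t + 1 ≠ 0 := (add_pos (Real.exp_pos _) one_pos).ne'
  refine ⟨?_, half_sq_mul_div_add_div_sq M hp⟩
  rw [hy, sq_sqrt_neg_mul_add_mul_sq hk.le, mul_zero]

/-- Along the heteroclinic curve, H_k ≡ H_k(M,0,0) = 0 and C ≡ C(M,0,0) = M²/2. -/
theorem heteroclinic_levels (k M α : ℝ) (hk : k < 0) (hM : M ≠ 0) :
    let p : ℝ → ℝ := fun t => Real.exp (M * Real.sqrt (-k) * (t + α))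
    let x : ℝ → ℝ := fun t => M * (p t - 1) / (p t + 1)
    let y : ℝ → ℝ := fun t => 2 * M ^ 2 * Real.sqrt (-k) * p t / (p t + 1) ^ 2
    let z : ℝ → ℝ := fun t => 2 * M ^ 2 * p t / (p t + 1) ^ 2
    ∀ t : ℝ,
      (1/2) * (y t ^ 2 + k * z t ^ 2) = 0 ∧
      (1/2) * x t ^ 2 + z t = M ^ 2 / 2 :=
  heteroclinic_levels_general k M α hk
end
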